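/- arXiv:2605.09157 — 2 statements merged into one kernel-verified Lean document; each statement's English description precedes it below -/
import Mathlib

section
/- Let r_max ≥ 0 and let r : ℝ → ℝ be measurable with |r(a)| ≤ r_max for all a ∈ ℝ. Fix μ ∈ ℝ and define g(σ) = ∫ r(a)·φ(a; μ, σ) da for σ > 0. Then g is differentiable on (0, ∞) and for every σ > 0 one has |σ·g′(σ)| ≤ 2·r_max. -/
/-!
Differentiating the Gaussian density in the scale gives `∂φ/∂σ = φ · ((a − μ)² − σ²) / σ³`.
For `σ/2 < s < 2σ` this is dominated by a multiple of `φ(·; μ, 2σ) · ((a − μ)² + 4σ²)`, which is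
integrable, so `g` can be differentiated under the integral sign. Then
`|σ g′(σ)| ≤ r_max · ∫ φ · ((a − μ)² + σ²) / σ² = 2 r_max`, since `N(μ, σ²)` has mass one and
variance `σ²`.
-/

open MeasureTheory Real

/-- Gaussian density `φ(a; μ, σ) = (2πσ²)^(−1/2) · exp(−(a−μ)²/(2σ²))`. -/
noncomputable def gpdf (μ σ a : ℝ) : ℝ :=
  (Real.sqrt (2 * Real.pi * σ ^ 2))⁻¹ * Real.exp (-((a - μ) ^ 2) / (2 * σ ^ 2))

open ProbabilityTheory
open scoped NNReal

namespace ProbabilityTheory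

lemma integrable_sq_sub_mul_gaussianPDFReal (μ : ℝ) (v : ℝ≥0) :
    Integrable fun x ↦ (x - μ) ^ 2 * gaussianPDFReal μ v x := by
  rcases eq_or_ne v 0 with rfl | hv
  · simp
  have h : Integrable (fun x ↦ (x - μ) ^ 2) (gaussianReal μ v) :=
    ((memLp_id_gaussianReal' 2 (by simp)).sub (memLp_const μ)).integrable_sq
  rw [gaussianReal_of_var_ne_zero μ hv, integrable_withDensity_iff_integrable_smul'
    (measurable_gaussianPDF μ v) (.of_forall fun _ ↦ gaussianPDF_lt_top)] at h
  simpa only [toReal_gaussianPDF, smul_eq_mul, mul_comm] using h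

lemma integral_sq_sub_mul_gaussianPDFReal (μ : ℝ) (v : ℝ≥0) :
    ∫ x, (x - μ) ^ 2 * gaussianPDFReal μ v x = v := by
  rcases eq_or_ne v 0 with rfl | hv
  · simp
  have h := variance_id_gaussianReal (μ := μ) (v := v)
  rw [variance_eq_integral measurable_id.aemeasurable,
    integral_gaussianReal_eq_integral_smul hv] at h
  simpa only [id, integral_id_gaussianReal, smul_eq_mul, mul_comm] using h

end ProbabilityTheory

lemma gpdf_eq_gaussianPDFReal (μ σ : ℝ) : gpdf μ σ = gaussianPDFReal μ (σ ^ 2).toNNReal := by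
  ext a
  rw [gpdf, gaussianPDFReal, Real.coe_toNNReal _ (sq_nonneg σ)]

lemma gpdf_nonneg (μ σ a : ℝ) : 0 ≤ gpdf μ σ a := by
  rw [gpdf]; positivity

@[fun_prop]
lemma measurable_gpdf (μ σ : ℝ) : Measurable (gpdf μ σ) := by
  rw [gpdf_eq_gaussianPDFReal]; exact measurable_gaussianPDFReal _ _

lemma gpdf_of_pos (μ a : ℝ) {σ : ℝ} (hσ : 0 < σ) :
    gpdf μ σ a = (√(2 * π))⁻¹ * (σ⁻¹ * exp (-(a - μ) ^ 2 / (2 * σ ^ 2))) := by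
  rw [gpdf, sqrt_mul (by positivity), sqrt_sq hσ.le, mul_inv, mul_assoc]

lemma integrable_gpdf (μ σ : ℝ) : Integrable (gpdf μ σ) := by
  rw [gpdf_eq_gaussianPDFReal]; exact integrable_gaussianPDFReal _ _

lemma integral_gpdf (μ : ℝ) {σ : ℝ} (hσ : σ ≠ 0) : ∫ a, gpdf μ σ a = 1 := by
  rw [gpdf_eq_gaussianPDFReal]
  exact integral_gaussianPDFReal_eq_one _ (by simpa using hσ)

lemma integrable_sq_sub_mul_gpdf (μ σ : ℝ) : Integrable fun a ↦ (a - μ) ^ 2 * gpdf μ σ a := by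
  simpa only [gpdf_eq_gaussianPDFReal] using integrable_sq_sub_mul_gaussianPDFReal μ _

lemma integral_sq_sub_mul_gpdf (μ σ : ℝ) : ∫ a, (a - μ) ^ 2 * gpdf μ σ a = σ ^ 2 := by
  rw [gpdf_eq_gaussianPDFReal, integral_sq_sub_mul_gaussianPDFReal,
    Real.coe_toNNReal _ (sq_nonneg σ)]

lemma hasDerivAt_gpdf (μ a : ℝ) {σ : ℝ} (hσ : 0 < σ) :
    HasDerivAt (fun s ↦ gpdf μ s a) (gpdf μ σ a * ((a - μ) ^ 2 - σ ^ 2) / σ ^ 3) σ := by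
  have hexponent : HasDerivAt (fun s ↦ -(a - μ) ^ 2 / (2 * s ^ 2)) ((a - μ) ^ 2 / σ ^ 3) σ := by
    refine ((hasDerivAt_const σ (-(a - μ) ^ 2)).div ((hasDerivAt_pow 2 σ).const_mul 2)
      (by positivity)).congr_deriv ?_
    field_simp
    ring
  have h := (((hasDerivAt_inv hσ.ne').mul hexponent.exp).const_mul (√(2 * π))⁻¹)
    |>.congr_of_eventuallyEq
      (Filter.eventually_of_mem (Ioi_mem_nhds hσ) fun s hs ↦ gpdf_of_pos μ a hs)
  refine h.congr_deriv ?_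
  rw [gpdf_of_pos μ a hσ]
  field_simp
  ring

lemma gpdf_le_mul_gpdf (μ a : ℝ) {s t : ℝ} (hs : 0 < s) (hst : s ≤ t) :
    gpdf μ s a ≤ t / s * gpdf μ t a := by
  have ht : 0 < t := hs.trans_le hst
  rw [gpdf_of_pos μ a hs, gpdf_of_pos μ a ht]
  have hexp : exp (-(a - μ) ^ 2 / (2 * s ^ 2)) ≤ exp (-(a - μ) ^ 2 / (2 * t ^ 2)) := by
    rw [exp_le_exp, neg_div, neg_div, neg_le_neg_iff]
    gcongr
  calc (√(2 * π))⁻¹ * (s⁻¹ * exp (-(a - μ) ^ 2 / (2 * s ^ 2)))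
      ≤ (√(2 * π))⁻¹ * (s⁻¹ * exp (-(a - μ) ^ 2 / (2 * t ^ 2))) := by gcongr
    _ = t / s * ((√(2 * π))⁻¹ * (t⁻¹ * exp (-(a - μ) ^ 2 / (2 * t ^ 2)))) := by
      field_simp

lemma abs_gpdf_mul_sq_sub_div_le (μ a : ℝ) {σ s : ℝ} (hσ : 0 < σ)
    (hs : s ∈ Set.Ioo (σ / 2) (2 * σ)) :
    |gpdf μ s a * ((a - μ) ^ 2 - s ^ 2) / s ^ 3|
      ≤ 32 / σ ^ 3 * (gpdf μ (2 * σ) a * ((a - μ) ^ 2 + 4 * σ ^ 2)) := by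
  obtain ⟨hs₁, hs₂⟩ := hs
  have hs₀ : 0 < s := by linarith
  have hsq : |(a - μ) ^ 2 - s ^ 2| ≤ (a - μ) ^ 2 + 4 * σ ^ 2 := by
    rw [abs_le]; constructor <;> nlinarith [sq_nonneg (a - μ)]
  have hpow : 2 * σ / s ^ 4 ≤ 32 / σ ^ 3 := by
    rw [div_le_div_iff₀ (by positivity) (by positivity)]
    have : σ ^ 4 ≤ 16 * s ^ 4 := by
      calc σ ^ 4 = 16 * (σ / 2) ^ 4 := by ring
        _ ≤ 16 * s ^ 4 := by gcongr
    nlinarith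
  calc |gpdf μ s a * ((a - μ) ^ 2 - s ^ 2) / s ^ 3|
      = gpdf μ s a * |(a - μ) ^ 2 - s ^ 2| / s ^ 3 := by
        rw [abs_div, abs_mul, abs_of_nonneg (gpdf_nonneg μ s a), abs_of_pos (pow_pos hs₀ 3)]
    _ ≤ 2 * σ / s * gpdf μ (2 * σ) a * ((a - μ) ^ 2 + 4 * σ ^ 2) / s ^ 3 := by
        gcongr
        exacts [mul_nonneg (by positivity) (gpdf_nonneg μ _ a), gpdf_le_mul_gpdf μ a hs₀ hs₂.le]
    _ = 2 * σ / s ^ 4 * (gpdf μ (2 * σ) a * ((a - μ) ^ 2 + 4 * σ ^ 2)) := by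
        field_simp
    _ ≤ 32 / σ ^ 3 * (gpdf μ (2 * σ) a * ((a - μ) ^ 2 + 4 * σ ^ 2)) := by
        gcongr
        exact mul_nonneg (gpdf_nonneg μ _ a) (by positivity)

lemma hasDerivAt_integral_mul_gpdf {r : ℝ → ℝ} {C : ℝ} (hr : AEStronglyMeasurable r)
    (hbd : ∀ᵐ a, |r a| ≤ C) (μ : ℝ) {σ : ℝ} (hσ : 0 < σ) :
    HasDerivAt (fun s ↦ ∫ a, r a * gpdf μ s a)
      ((∫ a, r a * (gpdf μ σ a * ((a - μ) ^ 2 - σ ^ 2))) / σ ^ 3) σ := by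
  have hbound : Integrable fun a ↦
      C * (32 / σ ^ 3 * (gpdf μ (2 * σ) a * ((a - μ) ^ 2 + 4 * σ ^ 2))) := by
    refine (((integrable_sq_sub_mul_gpdf μ (2 * σ)).add
      ((integrable_gpdf μ (2 * σ)).const_mul (4 * σ ^ 2))).const_mul (C * (32 / σ ^ 3))).congr ?_
    filter_upwards with a
    simp only [Pi.add_apply]
    ring
  have h := hasDerivAt_integral_of_dominated_loc_of_deriv_le
    (F := fun s a ↦ r a * gpdf μ s a)
    (F' := fun s a ↦ r a * (gpdf μ s a * ((a - μ) ^ 2 - s ^ 2) / s ^ 3))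
    (Ioo_mem_nhds (by linarith : σ / 2 < σ) (by linarith : σ < 2 * σ))
    (.of_forall fun s ↦ hr.mul (measurable_gpdf μ s).aestronglyMeasurable)
    ((integrable_gpdf μ σ).bdd_mul hr hbd)
    (hr.mul (by fun_prop))
    (by
      filter_upwards [hbd] with a ha s hs
      rw [norm_mul, Real.norm_eq_abs]
      exact mul_le_mul ha (abs_gpdf_mul_sq_sub_div_le μ a hσ hs) (abs_nonneg _)
        ((abs_nonneg _).trans ha))
    hbound
    (.of_forall fun a s hs ↦ (hasDerivAt_gpdf μ a (by linarith [hs.1])).const_mul (r a))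
  simpa only [← mul_div_assoc, integral_div] using h.2

lemma abs_integral_mul_gpdf_mul_sq_sub_le {r : ℝ → ℝ} {C : ℝ} (hbd : ∀ᵐ a, |r a| ≤ C)
    (μ : ℝ) {σ : ℝ} (hσ : σ ≠ 0) :
    |∫ a, r a * (gpdf μ σ a * ((a - μ) ^ 2 - σ ^ 2))| ≤ 2 * C * σ ^ 2 := by
  have hbound : Integrable fun a ↦ C * ((a - μ) ^ 2 * gpdf μ σ a + σ ^ 2 * gpdf μ σ a) :=
    ((integrable_sq_sub_mul_gpdf μ σ).add ((integrable_gpdf μ σ).const_mul (σ ^ 2))).const_mul C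
  calc |∫ a, r a * (gpdf μ σ a * ((a - μ) ^ 2 - σ ^ 2))|
      ≤ ∫ a, C * ((a - μ) ^ 2 * gpdf μ σ a + σ ^ 2 * gpdf μ σ a) := by
        rw [← Real.norm_eq_abs]
        refine norm_integral_le_of_norm_le hbound ?_
        filter_upwards [hbd] with a ha
        have hsq : |(a - μ) ^ 2 - σ ^ 2| ≤ (a - μ) ^ 2 + σ ^ 2 := by
          rw [abs_le]; constructor <;> nlinarith [sq_nonneg (a - μ), sq_nonneg σ]
        rw [Real.norm_eq_abs, abs_mul, abs_mul, abs_of_nonneg (gpdf_nonneg μ σ a)]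
        calc |r a| * (gpdf μ σ a * |(a - μ) ^ 2 - σ ^ 2|)
            ≤ C * (gpdf μ σ a * ((a - μ) ^ 2 + σ ^ 2)) := by
              gcongr
              · exact mul_nonneg (gpdf_nonneg μ σ a) (abs_nonneg _)
              · exact (abs_nonneg _).trans ha
              · exact gpdf_nonneg μ σ a
          _ = C * ((a - μ) ^ 2 * gpdf μ σ a + σ ^ 2 * gpdf μ σ a) := by ring
    _ = 2 * C * σ ^ 2 := by
        rw [integral_const_mul, integral_add (integrable_sq_sub_mul_gpdf μ σ)
          ((integrable_gpdf μ σ).const_mul _), integral_const_mul, integral_sq_sub_mul_gpdf,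
          integral_gpdf μ hσ]
        ring

theorem stmt1_general (r_max : ℝ) (r : ℝ → ℝ) (hmeas : Measurable r)
    (hbd : ∀ a, |r a| ≤ r_max) (μ : ℝ) :
    (∀ σ ∈ Set.Ioi (0 : ℝ),
      DifferentiableAt ℝ (fun σ' => ∫ a, r a * gpdf μ σ' a) σ) ∧
    (∀ σ : ℝ, 0 < σ →
      |σ * deriv (fun σ' => ∫ a, r a * gpdf μ σ' a) σ| ≤ 2 * r_max) := by
  have hderiv (σ : ℝ) (hσ : 0 < σ) :=
    hasDerivAt_integral_mul_gpdf hmeas.aestronglyMeasurable (.of_forall hbd) μ hσ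
  refine ⟨fun σ hσ ↦ (hderiv σ hσ).differentiableAt, fun σ hσ ↦ ?_⟩
  rw [(hderiv σ hσ).deriv]
  calc |σ * ((∫ a, r a * (gpdf μ σ a * ((a - μ) ^ 2 - σ ^ 2))) / σ ^ 3)|
      = |∫ a, r a * (gpdf μ σ a * ((a - μ) ^ 2 - σ ^ 2))| / σ ^ 2 := by
        rw [abs_mul, abs_div, abs_of_pos hσ, abs_of_pos (pow_pos hσ 3)]
        field_simp
    _ ≤ 2 * r_max * σ ^ 2 / σ ^ 2 := by
        gcongr
        exact abs_integral_mul_gpdf_mul_sq_sub_le (.of_forall hbd) μ hσ.ne'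
    _ = 2 * r_max := by field_simp

/-- for bounded measurable `r`, `g(σ) = ∫ r(a) φ(a; μ, σ) da` is
differentiable on `(0, ∞)` and `|σ·g′(σ)| ≤ 2·r_max`. -/
theorem stmt1 (r_max : ℝ) (hrmax : 0 ≤ r_max) (r : ℝ → ℝ) (hmeas : Measurable r)
    (hbd : ∀ a, |r a| ≤ r_max) (μ : ℝ) :
    (∀ σ ∈ Set.Ioi (0 : ℝ),
      DifferentiableAt ℝ (fun σ' => ∫ a, r a * gpdf μ σ' a) σ) ∧
    (∀ σ : ℝ, 0 < σ →
      |σ * deriv (fun σ' => ∫ a, r a * gpdf μ σ' a) σ| ≤ 2 * r_max) :=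
  stmt1_general r_max r hmeas hbd μ
end

section
/- Let r : ℝ → ℝ be continuously differentiable with r and its derivative r′ bounded, let α ≥ 0, and adopt the curve setup. Define J(t) = ∫ (r(a) − α·log m_t(a))·m_t(a) da. Then J is differentiable, and for every t₀ ∈ ℝ: for every ε ∈ ℝ the map t ↦ Σ_{k=1}^N w_k(t)·( r(f_k(t, ε)) − α·log m_t(f_k(t, ε)) ) is differentiable at t₀, and J′(t₀) = ∫ [ (d/dt Σ_{k=1}^N w_k(t)·( r(f_k(t, ε)) − α·log m_t(f_k(t, ε)) ))|_{t = t₀} ]·φ(ε; 0, 1) dε. -/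
open MeasureTheory Real

/-- Gaussian mixture density along a parameter curve:
`m_t(a) = Σ_k w_k(t) · φ(a; μ_k(t), σ_k(t))`. -/
noncomputable def mcurve {N : ℕ} (μc σc wc : Fin N → ℝ → ℝ) (t a : ℝ) : ℝ :=
  ∑ k, wc k t * gpdf (μc k t) (σc k t) a

/-!
Splitting `m_t` into its components and substituting `a = μ_k(t) + σ_k(t) ε` in the `k`-th one
turns `J(t)` into `∫ Φ(t, ε) φ(ε; 0, 1) dε`, where `Φ` is the mixture integrand of the statement.
For `t` in a compact neighbourhood of `t₀` the curve data are bounded, `σ_k` and `w_k` are bounded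
away from `0`, and `|∂ₜΦ(t, ε)|` is then at most a constant times `(1 + |ε|)²`: `log m_t` grows at
most quadratically because `m_t` is bounded above and dominates each weighted component, and the
log-derivative of `m_t` along a moving point is an average, with the responsibilities
`w_j φ_j / m_t` as weights, of the log-derivatives of the components. Differentiation under the
integral sign then gives the formula.
-/

lemma gpdf_eq {σ : ℝ} (hσ : 0 < σ) (μ a : ℝ) :
    gpdf μ σ a = (σ * √(2 * π))⁻¹ * exp (-((a - μ) ^ 2) / (2 * σ ^ 2)) := by
  rw [gpdf, show 2 * π * σ ^ 2 = σ ^ 2 * (2 * π) by ring, sqrt_mul (sq_nonneg σ), sqrt_sq hσ.le]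

lemma one_le_sqrt_two_mul_pi : 1 ≤ √(2 * π) :=
  one_le_sqrt.2 (by linarith [pi_gt_three])

lemma gpdf_pos {σ : ℝ} (hσ : 0 < σ) (μ a : ℝ) : 0 < gpdf μ σ a := by
  rw [gpdf_eq hσ]
  have := one_le_sqrt_two_mul_pi
  positivity

lemma gpdf_le_inv {σ : ℝ} (hσ : 0 < σ) (μ a : ℝ) : gpdf μ σ a ≤ σ⁻¹ := by
  have hexp : exp (-((a - μ) ^ 2) / (2 * σ ^ 2)) ≤ 1 :=
    exp_le_one_iff.2 (div_nonpos_of_nonpos_of_nonneg (by nlinarith) (by positivity))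
  have hpre : (σ * √(2 * π))⁻¹ ≤ σ⁻¹ :=
    inv_anti₀ hσ (le_mul_of_one_le_right hσ.le one_le_sqrt_two_mul_pi)
  rw [gpdf_eq hσ]
  calc _ ≤ (σ * √(2 * π))⁻¹ * 1 := by gcongr
    _ ≤ σ⁻¹ := by rwa [mul_one]

lemma log_gpdf {σ : ℝ} (hσ : 0 < σ) (μ a : ℝ) :
    log (gpdf μ σ a) = -log (σ * √(2 * π)) - (a - μ) ^ 2 / (2 * σ ^ 2) := by
  have := one_le_sqrt_two_mul_pi
  rw [gpdf_eq hσ, log_mul (by positivity) (exp_pos _).ne', log_inv, log_exp]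
  ring

lemma gpdf_add_mul {σ : ℝ} (hσ : 0 < σ) (μ ε : ℝ) :
    gpdf μ σ (μ + σ * ε) = σ⁻¹ * gpdf 0 1 ε := by
  have hexp : -((μ + σ * ε - μ) ^ 2) / (2 * σ ^ 2) = -((ε - 0) ^ 2) / (2 * 1 ^ 2) := by
    field_simp
    ring
  rw [gpdf_eq hσ, gpdf_eq one_pos, hexp, mul_inv, one_mul, mul_assoc]

lemma continuous_gpdf (μ σ : ℝ) : Continuous (gpdf μ σ) := by
  unfold gpdf
  fun_prop

lemma integrable_quadratic_mul_gpdf {σ : ℝ} (hσ : 0 < σ) (μ c d : ℝ) :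
    Integrable (fun a => (c + d * (a - μ) ^ 2) * gpdf μ σ a) := by
  have hb : 0 < 1 / (2 * σ ^ 2) := by positivity
  have hsq : Integrable (fun x : ℝ => x ^ 2 * exp (-(1 / (2 * σ ^ 2)) * x ^ 2)) := by
    simpa using integrable_rpow_mul_exp_neg_mul_sq hb (s := 2) (by norm_num)
  have hquad := ((integrable_exp_neg_mul_sq hb).const_mul c).add (hsq.const_mul d)
  refine ((hquad.comp_sub_right μ).const_mul (σ * √(2 * π))⁻¹).congr (ae_of_all _ fun a => ?_)
  simp only [Pi.add_apply, gpdf_eq hσ,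
    show -((a - μ) ^ 2) / (2 * σ ^ 2) = -(1 / (2 * σ ^ 2)) * (a - μ) ^ 2 by ring]
  ring

lemma integrable_one_add_abs_sq_mul_gpdf :
    Integrable (fun ε : ℝ => (1 + |ε|) ^ 2 * gpdf 0 1 ε) := by
  refine (integrable_quadratic_mul_gpdf one_pos 0 2 2).mono'
    ((by fun_prop : Continuous fun ε : ℝ => (1 + |ε|) ^ 2).mul
      (continuous_gpdf 0 1)).aestronglyMeasurable (ae_of_all _ fun ε => ?_)
  have hφ := gpdf_pos one_pos 0 ε
  rw [norm_mul, norm_of_nonneg hφ.le, norm_of_nonneg (sq_nonneg _), sub_zero]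
  exact mul_le_mul_of_nonneg_right (by nlinarith [sq_abs ε, sq_nonneg (|ε| - 1)]) hφ.le

lemma integral_comp_add_mul_mul_gpdf {σ : ℝ} (hσ : 0 < σ) (μ : ℝ) (g : ℝ → ℝ) :
    ∫ ε, g (μ + σ * ε) * gpdf 0 1 ε = ∫ a, g a * gpdf μ σ a := by
  have hsub : ∀ ε, g (μ + σ * ε) * gpdf 0 1 ε = σ * (g (μ + σ * ε) * gpdf μ σ (μ + σ * ε)) := by
    intro ε
    rw [gpdf_add_mul hσ]
    field_simp
  simp_rw [hsub]
  rw [integral_const_mul, Measure.integral_comp_mul_left (fun x => g (μ + x) * gpdf μ σ (μ + x)),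
    integral_add_left_eq_self (fun a => g a * gpdf μ σ a), abs_of_pos (inv_pos.2 hσ), smul_eq_mul,
    mul_inv_cancel_left₀ hσ.ne']

lemma MeasureTheory.Integrable.comp_add_mul_mul_gpdf {σ : ℝ} (hσ : 0 < σ) {μ : ℝ} {g : ℝ → ℝ}
    (hg : Integrable (fun a => g a * gpdf μ σ a)) :
    Integrable (fun ε => g (μ + σ * ε) * gpdf 0 1 ε) := by
  refine (((hg.comp_add_left μ).comp_mul_left' hσ.ne').const_mul σ).congr (ae_of_all _ fun ε => ?_)
  simp only [gpdf_add_mul hσ]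
  field_simp

/-- `d/dt log φ(b(t); u(t), s(t))`, in terms of the values `u, s, b` and the velocities
`u', s', b'` at `t`. -/
noncomputable def gpdfLogDeriv (u u' s s' b b' : ℝ) : ℝ :=
  -(s' / s) - (b - u) * (b' - u') / s ^ 2 + (b - u) ^ 2 * s' / s ^ 3

lemma hasDerivAt_gpdf_s8 {u s b : ℝ → ℝ} {u' s' b' t : ℝ} (hu : HasDerivAt u u' t)
    (hs : HasDerivAt s s' t) (hb : HasDerivAt b b' t) (hst : 0 < s t) :
    HasDerivAt (fun x => gpdf (u x) (s x) (b x))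
      (gpdf (u t) (s t) (b t) * gpdfLogDeriv (u t) u' (s t) s' (b t) b') t := by
  have h2π := one_le_sqrt_two_mul_pi
  have hpre : HasDerivAt (fun x => (s x * √(2 * π))⁻¹)
      (-(s' * √(2 * π)) / (s t * √(2 * π)) ^ 2) t :=
    (hs.mul_const _).inv (by positivity)
  have hexp := (((hb.fun_sub hu).fun_pow 2).fun_neg.fun_div ((hs.fun_pow 2).const_mul 2)
    (by positivity)).exp
  have hpos : ∀ᶠ x in nhds t, 0 < s x := hs.continuousAt.eventually (lt_mem_nhds hst)
  refine ((hpre.mul hexp).congr_of_eventuallyEq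
    (hpos.mono fun x hx => gpdf_eq hx _ _)).congr_deriv ?_
  rw [gpdf_eq hst, gpdfLogDeriv]
  field_simp
  ring

lemma abs_gpdfLogDeriv_le {u u' s s' b b' B R : ℝ} (hs : 0 < s) (hsB : s⁻¹ ≤ B) (hs' : |s'| ≤ B)
    (hb : |b - u| ≤ R) (hb' : |b' - u'| ≤ R) :
    |gpdfLogDeriv u u' s s' b b'| ≤ B ^ 2 + (B ^ 2 + B ^ 4) * R ^ 2 := by
  have hx : 0 < s⁻¹ := inv_pos.2 hs
  have hform : gpdfLogDeriv u u' s s' b b'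
      = -(s' * s⁻¹) + -((b - u) * (b' - u') * s⁻¹ ^ 2) + (b - u) ^ 2 * s' * s⁻¹ ^ 3 := by
    rw [gpdfLogDeriv]
    field_simp
    ring
  calc |gpdfLogDeriv u u' s s' b b'|
      ≤ |s'| * s⁻¹ + |b - u| * |b' - u'| * s⁻¹ ^ 2 + |b - u| ^ 2 * |s'| * s⁻¹ ^ 3 := by
        rw [hform]
        refine (abs_add_three _ _ _).trans (le_of_eq ?_)
        simp only [abs_neg, abs_mul, abs_pow, abs_of_pos hx]
    _ ≤ B * B + R * R * B ^ 2 + R ^ 2 * B * B ^ 3 := by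
        have := (abs_nonneg _).trans hb
        have := (abs_nonneg _).trans hs'
        gcongr
    _ = B ^ 2 + (B ^ 2 + B ^ 4) * R ^ 2 := by ring

section Mixture

variable {N : ℕ} {μc σc wc : Fin N → ℝ → ℝ} {t : ℝ}

lemma mul_gpdf_le_mcurve (hσ : ∀ j, 0 < σc j t) (hw : ∀ j, 0 ≤ wc j t) (k : Fin N) (a : ℝ) :
    wc k t * gpdf (μc k t) (σc k t) a ≤ mcurve μc σc wc t a :=
  Finset.single_le_sum (f := fun j => wc j t * gpdf (μc j t) (σc j t) a)
    (fun j _ => mul_nonneg (hw j) (gpdf_pos (hσ j) _ _).le) (Finset.mem_univ k)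

lemma mcurve_pos (hσ : ∀ j, 0 < σc j t) (hw : ∀ j, 0 < wc j t) (k : Fin N) (a : ℝ) :
    0 < mcurve μc σc wc t a :=
  (mul_pos (hw k) (gpdf_pos (hσ k) _ _)).trans_le
    (mul_gpdf_le_mcurve hσ (fun j => (hw j).le) k a)

lemma mcurve_le {B : ℝ} (hσ : ∀ j, 0 < σc j t) (hσB : ∀ j, (σc j t)⁻¹ ≤ B)
    (hw : ∀ j, 0 ≤ wc j t) (hwsum : ∑ j, wc j t = 1) (a : ℝ) : mcurve μc σc wc t a ≤ B :=
  calc mcurve μc σc wc t a ≤ ∑ j, wc j t * B :=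
        Finset.sum_le_sum fun j _ =>
          mul_le_mul_of_nonneg_left ((gpdf_le_inv (hσ j) _ _).trans (hσB j)) (hw j)
    _ = B := by rw [← Finset.sum_mul, hwsum, one_mul]

variable (μc σc wc) in
noncomputable def mcurveDeriv (t b b' : ℝ) : ℝ :=
  ∑ j, gpdf (μc j t) (σc j t) b * (deriv (wc j) t
    + wc j t * gpdfLogDeriv (μc j t) (deriv (μc j) t) (σc j t) (deriv (σc j) t) b b')

lemma hasDerivAt_mcurve (hμ : ∀ j, DifferentiableAt ℝ (μc j) t)
    (hσ : ∀ j, DifferentiableAt ℝ (σc j) t) (hw : ∀ j, DifferentiableAt ℝ (wc j) t)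
    (hσpos : ∀ j, 0 < σc j t) {b : ℝ → ℝ} {b' : ℝ} (hb : HasDerivAt b b' t) :
    HasDerivAt (fun x => mcurve μc σc wc x (b x)) (mcurveDeriv μc σc wc t (b t) b') t :=
  HasDerivAt.fun_sum fun j _ => ((hw j).hasDerivAt.mul (hasDerivAt_gpdf_s8 (hμ j).hasDerivAt
    (hσ j).hasDerivAt hb (hσpos j))).congr_deriv (by ring)

lemma abs_mcurveDeriv_le (hσ : ∀ j, 0 < σc j t) (hw : ∀ j, 0 < wc j t) {b b' L : ℝ}
    (hL : ∀ j, |deriv (wc j) t| / wc j t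
      + |gpdfLogDeriv (μc j t) (deriv (μc j) t) (σc j t) (deriv (σc j) t) b b'| ≤ L) :
    |mcurveDeriv μc σc wc t b b'| ≤ L * mcurve μc σc wc t b := by
  rw [mcurve, Finset.mul_sum]
  refine (Finset.abs_sum_le_sum_abs _ _).trans (Finset.sum_le_sum fun j _ => ?_)
  have hφ := gpdf_pos (hσ j) (μc j t) b
  set D := gpdfLogDeriv (μc j t) (deriv (μc j) t) (σc j t) (deriv (σc j) t) b b'
  have hsplit : |deriv (wc j) t + wc j t * D| ≤ wc j t * (|deriv (wc j) t| / wc j t + |D|) := by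
    rw [mul_add, mul_div_cancel₀ _ (hw j).ne', ← abs_of_pos (hw j), ← abs_mul, abs_of_pos (hw j)]
    exact abs_add_le _ _
  calc |gpdf (μc j t) (σc j t) b * (deriv (wc j) t + wc j t * D)|
      = gpdf (μc j t) (σc j t) b * |deriv (wc j) t + wc j t * D| := by
        rw [abs_mul, abs_of_pos hφ]
    _ ≤ gpdf (μc j t) (σc j t) b * (wc j t * L) := by
        gcongr
        exact hsplit.trans (mul_le_mul_of_nonneg_left (hL j) (hw j).le)
    _ = L * (wc j t * gpdf (μc j t) (σc j t) b) := by ring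

end Mixture

section Reparameterization

variable {N : ℕ} {μc σc wc : Fin N → ℝ → ℝ} {r : ℝ → ℝ} {α t : ℝ}

variable (μc σc wc r α)

noncomputable def softReward (t a : ℝ) : ℝ :=
  r a - α * log (mcurve μc σc wc t a)

noncomputable def softRewardDeriv (t b b' : ℝ) : ℝ :=
  deriv r b * b' - α * (mcurveDeriv μc σc wc t b b' / mcurve μc σc wc t b)

noncomputable def reparamObjective (t ε : ℝ) : ℝ :=
  ∑ k, wc k t * softReward μc σc wc r α t (μc k t + σc k t * ε)

noncomputable def reparamObjectiveDeriv (t ε : ℝ) : ℝ :=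
  ∑ k, (deriv (wc k) t * softReward μc σc wc r α t (μc k t + σc k t * ε)
    + wc k t * softRewardDeriv μc σc wc r α t (μc k t + σc k t * ε)
        (deriv (μc k) t + deriv (σc k) t * ε))

variable {μc σc wc r α}

lemma hasDerivAt_softReward (hμ : ∀ j, DifferentiableAt ℝ (μc j) t)
    (hσ : ∀ j, DifferentiableAt ℝ (σc j) t) (hw : ∀ j, DifferentiableAt ℝ (wc j) t)
    (hσpos : ∀ j, 0 < σc j t) {b : ℝ → ℝ} {b' : ℝ} (hb : HasDerivAt b b' t)
    (hr : DifferentiableAt ℝ r (b t)) (hm : mcurve μc σc wc t (b t) ≠ 0) :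
    HasDerivAt (fun x => softReward μc σc wc r α x (b x))
      (softRewardDeriv μc σc wc r α t (b t) b') t :=
  (hr.hasDerivAt.comp t hb).sub (((hasDerivAt_mcurve hμ hσ hw hσpos hb).log hm).const_mul α)

lemma hasDerivAt_reparamObjective (hμ : ∀ k, DifferentiableAt ℝ (μc k) t)
    (hσ : ∀ k, DifferentiableAt ℝ (σc k) t) (hw : ∀ k, DifferentiableAt ℝ (wc k) t)
    (hσpos : ∀ k, 0 < σc k t) (hwpos : ∀ k, 0 < wc k t) (hr : Differentiable ℝ r) (ε : ℝ) :
    HasDerivAt (fun x => reparamObjective μc σc wc r α x ε)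
      (reparamObjectiveDeriv μc σc wc r α t ε) t :=
  HasDerivAt.fun_sum fun k _ => (hw k).hasDerivAt.mul <|
    hasDerivAt_softReward hμ hσ hw hσpos ((hμ k).hasDerivAt.add ((hσ k).hasDerivAt.mul_const ε))
      (hr _) (mcurve_pos hσpos hwpos k _).ne'

end Reparameterization

structure CurveBoundAt {N : ℕ} (μc σc wc : Fin N → ℝ → ℝ) (B t : ℝ) : Prop where
  one_le : 1 ≤ B
  abs_mean_le : ∀ k, |μc k t| ≤ B
  std_le : ∀ k, σc k t ≤ B
  inv_le_std : ∀ k, B⁻¹ ≤ σc k t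
  inv_le_weight : ∀ k, B⁻¹ ≤ wc k t
  abs_deriv_mean_le : ∀ k, |deriv (μc k) t| ≤ B
  abs_deriv_std_le : ∀ k, |deriv (σc k) t| ≤ B
  abs_deriv_weight_le : ∀ k, |deriv (wc k) t| ≤ B

lemma exists_curveBoundAt {N : ℕ} {μc σc wc : Fin N → ℝ → ℝ} (hμ : ∀ k, ContDiff ℝ 1 (μc k))
    (hσ : ∀ k, ContDiff ℝ 1 (σc k)) (hw : ∀ k, ContDiff ℝ 1 (wc k))
    (hσpos : ∀ k t, 0 < σc k t) (hwpos : ∀ k t, 0 < wc k t) {s : Set ℝ} (hs : IsCompact s) :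
    ∃ B, ∀ t ∈ s, CurveBoundAt μc σc wc B t := by
  let F : ℝ → Fin N → Fin 7 → ℝ := fun t k => ![μc k t, σc k t, (σc k t)⁻¹, (wc k t)⁻¹,
    deriv (μc k) t, deriv (σc k) t, deriv (wc k) t]
  have hF : Continuous F := continuous_pi fun k => continuous_pi fun i => by
    fin_cases i
    exacts [(hμ k).continuous, (hσ k).continuous,
      (hσ k).continuous.inv₀ fun t => (hσpos k t).ne',
      (hw k).continuous.inv₀ fun t => (hwpos k t).ne', (hμ k).continuous_deriv le_rfl,
      (hσ k).continuous_deriv le_rfl, (hw k).continuous_deriv le_rfl]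
  obtain ⟨M, hM⟩ := hs.exists_bound_of_continuousOn hF.continuousOn
  have hle : ∀ t ∈ s, ∀ k i, |F t k i| ≤ max M 1 := fun t ht k i =>
    ((norm_le_pi_norm (F t k) i).trans (norm_le_pi_norm (F t) k)).trans
      ((hM t ht).trans (le_max_left _ _))
  exact ⟨max M 1, fun t ht => ⟨le_max_right _ _, fun k => hle t ht k 0,
    fun k => (le_abs_self _).trans (hle t ht k 1),
    fun k => inv_le_of_inv_le₀ (hσpos k t) ((le_abs_self _).trans (hle t ht k 2)),
    fun k => inv_le_of_inv_le₀ (hwpos k t) ((le_abs_self _).trans (hle t ht k 3)),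
    fun k => hle t ht k 4, fun k => hle t ht k 5, fun k => hle t ht k 6⟩⟩

lemma abs_add_mul_le {x y B : ℝ} (hx : |x| ≤ B) (hy : |y| ≤ B) (ε : ℝ) :
    |x + y * ε| ≤ B * (1 + |ε|) :=
  calc |x + y * ε| ≤ |x| + |y| * |ε| := by rw [← abs_mul]; exact abs_add_le _ _
    _ ≤ B * (1 + |ε|) := by rw [mul_one_add]; gcongr

namespace CurveBoundAt

variable {N : ℕ} {μc σc wc : Fin N → ℝ → ℝ} {r : ℝ → ℝ} {α B C t : ℝ}
  (hB : CurveBoundAt μc σc wc B t)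
include hB

lemma pos : 0 < B := zero_lt_one.trans_le hB.one_le

lemma std_pos (k : Fin N) : 0 < σc k t := (inv_pos.2 hB.pos).trans_le (hB.inv_le_std k)

lemma weight_pos (k : Fin N) : 0 < wc k t := (inv_pos.2 hB.pos).trans_le (hB.inv_le_weight k)

lemma inv_std_le (k : Fin N) : (σc k t)⁻¹ ≤ B := inv_le_of_inv_le₀ hB.pos (hB.inv_le_std k)

lemma abs_deriv_weight_div_le (k : Fin N) : |deriv (wc k) t| / wc k t ≤ B ^ 2 := by
  rw [div_eq_mul_inv, sq]
  exact mul_le_mul (hB.abs_deriv_weight_le k) (inv_le_of_inv_le₀ hB.pos (hB.inv_le_weight k))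
    (inv_pos.2 (hB.weight_pos k)).le hB.pos.le

lemma abs_std_le (k : Fin N) : |σc k t| ≤ B := by
  rw [abs_of_pos (hB.std_pos k)]
  exact hB.std_le k

lemma abs_add_mul_sub_le (k j : Fin N) (ε : ℝ) :
    |μc k t + σc k t * ε - μc j t| ≤ 2 * B * (1 + |ε|) := by
  have := abs_add_mul_le (hB.abs_mean_le k) (hB.abs_std_le k) ε
  have := hB.abs_mean_le j
  have := abs_nonneg ε
  nlinarith [abs_sub (μc k t + σc k t * ε) (μc j t), hB.pos]

lemma abs_deriv_add_mul_sub_le (k j : Fin N) (ε : ℝ) :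
    |deriv (μc k) t + deriv (σc k) t * ε - deriv (μc j) t| ≤ 2 * B * (1 + |ε|) := by
  have := abs_add_mul_le (hB.abs_deriv_mean_le k) (hB.abs_deriv_std_le k) ε
  have := hB.abs_deriv_mean_le j
  have := abs_nonneg ε
  nlinarith [abs_sub (deriv (μc k) t + deriv (σc k) t * ε) (deriv (μc j) t), hB.pos]

lemma abs_log_mcurve_le (hwsum : ∑ j, wc j t = 1) (k : Fin N) (a : ℝ) :
    |log (mcurve μc σc wc t a)| ≤ 4 * B + B ^ 2 / 2 * (a - μc k t) ^ 2 := by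
  have hσ := hB.std_pos k
  have hw := hB.weight_pos k
  have hm : 0 < mcurve μc σc wc t a := mcurve_pos hB.std_pos hB.weight_pos k a
  have hupper : log (mcurve μc σc wc t a) ≤ B := (log_le_self hm.le).trans
    (mcurve_le hB.std_pos hB.inv_std_le (fun j => (hB.weight_pos j).le) hwsum a)
  have hlog_w : -B ≤ log (wc k t) := by
    rw [← neg_neg (log (wc k t)), ← log_inv, neg_le_neg_iff]
    exact (log_le_self (inv_pos.2 hw).le).trans (inv_le_of_inv_le₀ hB.pos (hB.inv_le_weight k))
  have hlog_norm : log (σc k t * √(2 * π)) ≤ 3 * B := by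
    have h2π : √(2 * π) ≤ 3 := (sqrt_le_left (by norm_num)).2 (by nlinarith [pi_le_four])
    refine (log_le_self (by positivity)).trans ?_
    nlinarith [hB.std_le k, one_le_sqrt_two_mul_pi]
  have hquad : (a - μc k t) ^ 2 / (2 * σc k t ^ 2) ≤ B ^ 2 / 2 * (a - μc k t) ^ 2 := by
    rw [div_eq_mul_inv, mul_inv, ← inv_pow, mul_comm]
    have := pow_le_pow_left₀ (inv_pos.2 hσ).le (hB.inv_std_le k) 2
    nlinarith [sq_nonneg (a - μc k t)]
  have hlower : -(4 * B + B ^ 2 / 2 * (a - μc k t) ^ 2) ≤ log (mcurve μc σc wc t a) :=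
    calc -(4 * B + B ^ 2 / 2 * (a - μc k t) ^ 2)
        ≤ log (wc k t) + log (gpdf (μc k t) (σc k t) a) := by
          rw [log_gpdf hσ]
          linarith
      _ = log (wc k t * gpdf (μc k t) (σc k t) a) :=
          (log_mul hw.ne' (gpdf_pos hσ _ _).ne').symm
      _ ≤ log (mcurve μc σc wc t a) :=
          log_le_log (mul_pos hw (gpdf_pos hσ _ _))
            (mul_gpdf_le_mcurve hB.std_pos (fun j => (hB.weight_pos j).le) k a)
  exact abs_le.2 ⟨hlower, hupper.trans (by nlinarith [hB.pos, sq_nonneg (a - μc k t)])⟩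

lemma abs_mcurveDeriv_div_le (k : Fin N) (ε : ℝ) :
    |mcurveDeriv μc σc wc t (μc k t + σc k t * ε) (deriv (μc k) t + deriv (σc k) t * ε)
      / mcurve μc σc wc t (μc k t + σc k t * ε)| ≤ 10 * B ^ 6 * (1 + |ε|) ^ 2 := by
  have hm : 0 < mcurve μc σc wc t (μc k t + σc k t * ε) :=
    mcurve_pos hB.std_pos hB.weight_pos k _
  rw [abs_div, abs_of_pos hm, div_le_iff₀ hm]
  refine abs_mcurveDeriv_le hB.std_pos hB.weight_pos fun j => ?_
  have hD := abs_gpdfLogDeriv_le (hB.std_pos j) (hB.inv_std_le j) (hB.abs_deriv_std_le j)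
    (hB.abs_add_mul_sub_le k j ε) (hB.abs_deriv_add_mul_sub_le k j ε)
  have hρ : 1 ≤ (1 + |ε|) ^ 2 := one_le_pow₀ (by linarith [abs_nonneg ε])
  have hB2 : B ^ 2 ≤ B ^ 6 := pow_le_pow_right₀ hB.one_le (by norm_num)
  have hB4 : B ^ 4 ≤ B ^ 6 := pow_le_pow_right₀ hB.one_le (by norm_num)
  nlinarith [hB.abs_deriv_weight_div_le j, mul_le_mul_of_nonneg_right hB2 (sq_nonneg (1 + |ε|)),
    mul_le_mul_of_nonneg_right hB4 (sq_nonneg (1 + |ε|)),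
    mul_le_mul_of_nonneg_left hρ (by positivity : (0:ℝ) ≤ B ^ 6)]

lemma abs_softReward_le (hwsum : ∑ j, wc j t = 1) (hrb : ∀ a, |r a| ≤ C) (k : Fin N) (a : ℝ) :
    |softReward μc σc wc r α t a| ≤ C + |α| * (4 * B + B ^ 2 / 2 * (a - μc k t) ^ 2) := by
  refine (abs_sub _ _).trans (add_le_add (hrb a) ?_)
  rw [abs_mul]
  exact mul_le_mul_of_nonneg_left (hB.abs_log_mcurve_le hwsum k a) (abs_nonneg α)

lemma abs_softReward_add_mul_le (hwsum : ∑ j, wc j t = 1) (hrb : ∀ a, |r a| ≤ C) (k : Fin N)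
    (ε : ℝ) :
    |softReward μc σc wc r α t (μc k t + σc k t * ε)|
      ≤ (C + 5 * |α| * B ^ 4) * (1 + |ε|) ^ 2 := by
  have h := hB.abs_softReward_le (α := α) hwsum hrb k (μc k t + σc k t * ε)
  have hC : 0 ≤ C := (abs_nonneg _).trans (hrb 0)
  have hρ : 1 ≤ (1 + |ε|) ^ 2 := one_le_pow₀ (by linarith [abs_nonneg ε])
  have hσε : (μc k t + σc k t * ε - μc k t) ^ 2 ≤ B ^ 2 * (1 + |ε|) ^ 2 := by
    rw [add_sub_cancel_left, ← mul_pow, ← sq_abs, abs_mul]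
    exact pow_le_pow_left₀ (by positivity) (mul_le_mul (hB.abs_std_le k)
      (le_add_of_nonneg_left zero_le_one) (abs_nonneg _) hB.pos.le) 2
  have hB4 : B ≤ B ^ 4 := le_self_pow₀ hB.one_le (by norm_num)
  have hα := abs_nonneg α
  linarith [mul_le_mul_of_nonneg_left hσε (by positivity : 0 ≤ |α| * B ^ 2 / 2),
    mul_le_mul_of_nonneg_left hB4 hα,
    mul_le_mul_of_nonneg_left hρ (by positivity : 0 ≤ |α| * B ^ 4),
    mul_le_mul_of_nonneg_left hρ hC, (by positivity : 0 ≤ |α| * B ^ 4 * (1 + |ε|) ^ 2)]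

lemma abs_softRewardDeriv_add_mul_le (hr'b : ∀ a, |deriv r a| ≤ C) (k : Fin N) (ε : ℝ) :
    |softRewardDeriv μc σc wc r α t (μc k t + σc k t * ε) (deriv (μc k) t + deriv (σc k) t * ε)|
      ≤ (C + 10 * |α|) * B ^ 6 * (1 + |ε|) ^ 2 := by
  have hC : 0 ≤ C := (abs_nonneg _).trans (hr'b 0)
  have hρ : 1 ≤ 1 + |ε| := le_add_of_nonneg_right (abs_nonneg ε)
  have hvel : |deriv r (μc k t + σc k t * ε) * (deriv (μc k) t + deriv (σc k) t * ε)|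
      ≤ C * (B * (1 + |ε|)) := by
    rw [abs_mul]
    exact mul_le_mul (hr'b _) (abs_add_mul_le (hB.abs_deriv_mean_le k) (hB.abs_deriv_std_le k) ε)
      (abs_nonneg _) hC
  have hlog := mul_le_mul_of_nonneg_left (hB.abs_mcurveDeriv_div_le k ε) (abs_nonneg α)
  have hmono : B * (1 + |ε|) ≤ B ^ 6 * (1 + |ε|) ^ 2 :=
    mul_le_mul (le_self_pow₀ hB.one_le (by norm_num)) (le_self_pow₀ hρ (by norm_num))
      (by positivity) (by positivity)
  refine (abs_sub _ _).trans ?_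
  rw [abs_mul α]
  nlinarith [mul_le_mul_of_nonneg_left hmono hC]

lemma abs_reparamObjectiveDeriv_le (hwsum : ∑ j, wc j t = 1) (hrb : ∀ a, |r a| ≤ C)
    (hr'b : ∀ a, |deriv r a| ≤ C) (ε : ℝ) :
    |reparamObjectiveDeriv μc σc wc r α t ε|
      ≤ N * ((2 * C + 15 * |α|) * B ^ 6) * (1 + |ε|) ^ 2 := by
  have hC : 0 ≤ C := (abs_nonneg _).trans (hrb 0)
  have hterm : ∀ k : Fin N,
      |deriv (wc k) t * softReward μc σc wc r α t (μc k t + σc k t * ε)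
        + wc k t * softRewardDeriv μc σc wc r α t (μc k t + σc k t * ε)
            (deriv (μc k) t + deriv (σc k) t * ε)|
      ≤ (2 * C + 15 * |α|) * B ^ 6 * (1 + |ε|) ^ 2 := by
    intro k
    have hw1 : wc k t ≤ 1 := hwsum ▸ Finset.single_le_sum
      (fun j _ => (hB.weight_pos j).le) (Finset.mem_univ k)
    have h1 := mul_le_mul (hB.abs_deriv_weight_le k)
      (hB.abs_softReward_add_mul_le (α := α) hwsum hrb k ε) (abs_nonneg _) hB.pos.le
    have h2 := mul_le_mul hw1 (hB.abs_softRewardDeriv_add_mul_le (α := α) hr'b k ε)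
      (abs_nonneg _) zero_le_one
    have hB' : B * (C + 5 * |α| * B ^ 4) ≤ (C + 5 * |α|) * B ^ 6 := by
      nlinarith [mul_le_mul_of_nonneg_left (le_self_pow₀ hB.one_le (by norm_num : 6 ≠ 0)) hC,
        mul_le_mul_of_nonneg_left (pow_le_pow_right₀ hB.one_le (by norm_num : 5 ≤ 6))
          (abs_nonneg α)]
    refine (abs_add_le _ _).trans ?_
    rw [abs_mul, abs_mul, abs_of_pos (hB.weight_pos k)]
    nlinarith [mul_le_mul_of_nonneg_right hB' (sq_nonneg (1 + |ε|)), abs_nonneg α,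
      (by positivity : 0 ≤ |α| * B ^ 6 * (1 + |ε|) ^ 2)]
  calc |reparamObjectiveDeriv μc σc wc r α t ε|
      ≤ ∑ _k : Fin N, (2 * C + 15 * |α|) * B ^ 6 * (1 + |ε|) ^ 2 :=
        (Finset.abs_sum_le_sum_abs _ _).trans (Finset.sum_le_sum fun k _ => hterm k)
    _ = _ := by
        simp only [Finset.sum_const, Finset.card_univ, Fintype.card_fin, nsmul_eq_mul]
        ring

section Integrals

variable (hwsum : ∑ j, wc j t = 1) (hr : Measurable r) (hrb : ∀ a, |r a| ≤ C)
include hwsum hr hrb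

lemma integrable_softReward_mul_gpdf (k : Fin N) :
    Integrable (fun a => softReward μc σc wc r α t a * gpdf (μc k t) (σc k t) a) := by
  refine (integrable_quadratic_mul_gpdf (hB.std_pos k) (μc k t) (C + |α| * (4 * B))
    (|α| * (B ^ 2 / 2))).mono' ?_ (ae_of_all _ fun a => ?_)
  · unfold softReward mcurve gpdf
    exact Measurable.aestronglyMeasurable (by fun_prop)
  · rw [norm_mul, norm_of_nonneg (gpdf_pos (hB.std_pos k) _ _).le, norm_eq_abs]
    refine mul_le_mul_of_nonneg_right ((hB.abs_softReward_le hwsum hrb k a).trans_eq ?_)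
      (gpdf_pos (hB.std_pos k) _ _).le
    ring

lemma integrable_softReward_add_mul_mul_gpdf (k : Fin N) :
    Integrable (fun ε => softReward μc σc wc r α t (μc k t + σc k t * ε) * gpdf 0 1 ε) :=
  (hB.integrable_softReward_mul_gpdf (α := α) hwsum hr hrb k).comp_add_mul_mul_gpdf (hB.std_pos k)

lemma integrable_reparamObjective_mul_gpdf :
    Integrable (fun ε => reparamObjective μc σc wc r α t ε * gpdf 0 1 ε) := by
  simp only [reparamObjective, Finset.sum_mul, mul_assoc]
  exact integrable_finsetSum _ fun k _ =>
    (hB.integrable_softReward_add_mul_mul_gpdf hwsum hr hrb k).const_mul _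

lemma integral_softReward_mul_mcurve :
    ∫ a, softReward μc σc wc r α t a * mcurve μc σc wc t a
      = ∫ ε, reparamObjective μc σc wc r α t ε * gpdf 0 1 ε := by
  simp only [mcurve, reparamObjective, Finset.mul_sum, Finset.sum_mul]
  rw [integral_finsetSum _ fun k _ => ?_, integral_finsetSum _ fun k _ => ?_]
  · refine Finset.sum_congr rfl fun k _ => ?_
    simp only [mul_left_comm _ (wc k t), mul_assoc, integral_const_mul]
    rw [integral_comp_add_mul_mul_gpdf (hB.std_pos k)]
  · simpa only [mul_assoc] using
      (hB.integrable_softReward_add_mul_mul_gpdf hwsum hr hrb k).const_mul (wc k t)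
  · simpa only [mul_left_comm _ (wc k t)] using
      (hB.integrable_softReward_mul_gpdf hwsum hr hrb k).const_mul (wc k t)

end Integrals

end CurveBoundAt

lemma hasDerivAt_integral_reparamObjective_mul_gpdf {N : ℕ} {μc σc wc : Fin N → ℝ → ℝ}
    (hμ : ∀ k, ContDiff ℝ 1 (μc k)) (hσ : ∀ k, ContDiff ℝ 1 (σc k))
    (hw : ∀ k, ContDiff ℝ 1 (wc k)) (hσpos : ∀ k t, 0 < σc k t) (hwpos : ∀ k t, 0 < wc k t)
    (hwsum : ∀ t, ∑ k, wc k t = 1) {r : ℝ → ℝ} (hr : Differentiable ℝ r) {C : ℝ}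
    (hrb : ∀ a, |r a| ≤ C) (hr'b : ∀ a, |deriv r a| ≤ C) (α t₀ : ℝ) :
    HasDerivAt (fun t => ∫ ε, reparamObjective μc σc wc r α t ε * gpdf 0 1 ε)
      (∫ ε, reparamObjectiveDeriv μc σc wc r α t₀ ε * gpdf 0 1 ε) t₀ := by
  obtain ⟨B, hB⟩ := exists_curveBoundAt hμ hσ hw hσpos hwpos (isCompact_closedBall t₀ 1)
  have hr_meas : Measurable r := hr.continuous.measurable
  have hr'_meas := measurable_deriv r
  refine (hasDerivAt_integral_of_dominated_loc_of_deriv_le (Metric.closedBall_mem_nhds t₀ one_pos)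
    (F' := fun t ε => reparamObjectiveDeriv μc σc wc r α t ε * gpdf 0 1 ε)
    (bound := fun ε => N * ((2 * C + 15 * |α|) * B ^ 6) * ((1 + |ε|) ^ 2 * gpdf 0 1 ε))
    (Filter.Eventually.of_forall fun t => ?_)
    ((hB t₀ (Metric.mem_closedBall_self zero_le_one)).integrable_reparamObjective_mul_gpdf
      (hwsum t₀) hr_meas hrb) ?_ (ae_of_all _ fun ε t ht => ?_)
    (integrable_one_add_abs_sq_mul_gpdf.const_mul _) (ae_of_all _ fun ε t _ => ?_)).2
  · unfold reparamObjective softReward mcurve gpdf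
    exact Measurable.aestronglyMeasurable (by fun_prop)
  · unfold reparamObjectiveDeriv softRewardDeriv mcurveDeriv gpdfLogDeriv softReward mcurve gpdf
    exact Measurable.aestronglyMeasurable (by fun_prop)
  · have hφ := gpdf_pos one_pos 0 ε
    rw [norm_mul, norm_of_nonneg hφ.le, norm_eq_abs, ← mul_assoc]
    exact mul_le_mul_of_nonneg_right
      ((hB t ht).abs_reparamObjectiveDeriv_le (hwsum t) hrb hr'b ε) hφ.le
  · exact (hasDerivAt_reparamObjective (fun k => (hμ k).differentiable one_ne_zero t)
      (fun k => (hσ k).differentiable one_ne_zero t) (fun k => (hw k).differentiable one_ne_zero t)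
      (hσpos · t) (hwpos · t) hr ε).mul_const _

theorem stmt8_general (N : ℕ) (μc σc wc : Fin N → ℝ → ℝ)
    (hμ : ∀ k, ContDiff ℝ 1 (μc k)) (hσ : ∀ k, ContDiff ℝ 1 (σc k))
    (hw : ∀ k, ContDiff ℝ 1 (wc k))
    (hσpos : ∀ k t, 0 < σc k t) (hwpos : ∀ k t, 0 < wc k t)
    (hwsum : ∀ t, (∑ k, wc k t) = 1)
    (r : ℝ → ℝ) (hr : ContDiff ℝ 1 r) (C : ℝ)
    (hrb : ∀ a, |r a| ≤ C) (hr'b : ∀ a, |deriv r a| ≤ C)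
    (α : ℝ) :
    Differentiable ℝ (fun t =>
      ∫ a, (r a - α * Real.log (mcurve μc σc wc t a)) * mcurve μc σc wc t a) ∧
    ∀ t₀ : ℝ,
      (∀ ε : ℝ, DifferentiableAt ℝ
        (fun t => ∑ k, wc k t *
          (r (μc k t + σc k t * ε)
            - α * Real.log (mcurve μc σc wc t (μc k t + σc k t * ε)))) t₀) ∧
      deriv (fun t =>
          ∫ a, (r a - α * Real.log (mcurve μc σc wc t a)) * mcurve μc σc wc t a) t₀
        = ∫ ε,
            (deriv (fun t => ∑ k, wc k t *
              (r (μc k t + σc k t * ε)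
                - α * Real.log (mcurve μc σc wc t (μc k t + σc k t * ε)))) t₀)
            * gpdf 0 1 ε := by
  have hr_diff : Differentiable ℝ r := hr.differentiable one_ne_zero
  have hJ : (fun t => ∫ a, softReward μc σc wc r α t a * mcurve μc σc wc t a)
      = fun t => ∫ ε, reparamObjective μc σc wc r α t ε * gpdf 0 1 ε := by
    funext t
    obtain ⟨B, hB⟩ := exists_curveBoundAt hμ hσ hw hσpos hwpos (isCompact_singleton (x := t))
    exact (hB t rfl).integral_softReward_mul_mcurve (hwsum t) hr_diff.continuous.measurable hrb
  have hJ_deriv :=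
    hasDerivAt_integral_reparamObjective_mul_gpdf hμ hσ hw hσpos hwpos hwsum hr_diff hrb hr'b α
  have hΦ_deriv : ∀ t₀ ε, HasDerivAt (fun t => reparamObjective μc σc wc r α t ε)
      (reparamObjectiveDeriv μc σc wc r α t₀ ε) t₀ := fun t₀ =>
    hasDerivAt_reparamObjective (fun k => (hμ k).differentiable one_ne_zero t₀)
      (fun k => (hσ k).differentiable one_ne_zero t₀)
      (fun k => (hw k).differentiable one_ne_zero t₀) (hσpos · t₀) (hwpos · t₀) hr_diff
  refine ⟨fun t₀ => hJ ▸ (hJ_deriv t₀).differentiableAt,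
    fun t₀ => ⟨fun ε => (hΦ_deriv t₀ ε).differentiableAt, ?_⟩⟩
  change deriv (fun t => ∫ a, softReward μc σc wc r α t a * mcurve μc σc wc t a) t₀
    = ∫ ε, deriv (fun t => reparamObjective μc σc wc r α t ε) t₀ * gpdf 0 1 ε
  simp only [hJ, (hJ_deriv t₀).deriv, (hΦ_deriv t₀ _).deriv]

/-- marginalized reparameterization form of the derivative of the
entropy-regularized objective `J(t) = ∫ (r(a) − α·log m_t(a))·m_t(a) da` along a
smooth curve of Gaussian mixtures: with `f_k(t,ε) = μ_k(t) + σ_k(t)·ε`, for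
every `ε` the map `t ↦ Σ_k w_k(t)·(r(f_k(t,ε)) − α·log m_t(f_k(t,ε)))` is
differentiable at `t₀`, and `J′(t₀)` is the `φ(ε;0,1)`-integral of its
derivative at `t₀`. -/
theorem stmt8 (N : ℕ) (hN : 1 ≤ N) (μc σc wc : Fin N → ℝ → ℝ)
    (hμ : ∀ k, ContDiff ℝ 1 (μc k)) (hσ : ∀ k, ContDiff ℝ 1 (σc k))
    (hw : ∀ k, ContDiff ℝ 1 (wc k))
    (hσpos : ∀ k t, 0 < σc k t) (hwpos : ∀ k t, 0 < wc k t)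
    (hwsum : ∀ t, (∑ k, wc k t) = 1)
    (r : ℝ → ℝ) (hr : ContDiff ℝ 1 r) (C : ℝ)
    (hrb : ∀ a, |r a| ≤ C) (hr'b : ∀ a, |deriv r a| ≤ C)
    (α : ℝ) (hα : 0 ≤ α) :
    Differentiable ℝ (fun t =>
      ∫ a, (r a - α * Real.log (mcurve μc σc wc t a)) * mcurve μc σc wc t a) ∧
    ∀ t₀ : ℝ,
      (∀ ε : ℝ, DifferentiableAt ℝ
        (fun t => ∑ k, wc k t *
          (r (μc k t + σc k t * ε)
            - α * Real.log (mcurve μc σc wc t (μc k t + σc k t * ε)))) t₀) ∧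
      deriv (fun t =>
          ∫ a, (r a - α * Real.log (mcurve μc σc wc t a)) * mcurve μc σc wc t a) t₀
        = ∫ ε,
            (deriv (fun t => ∑ k, wc k t *
              (r (μc k t + σc k t * ε)
                - α * Real.log (mcurve μc σc wc t (μc k t + σc k t * ε)))) t₀)
            * gpdf 0 1 ε :=
  stmt8_general N μc σc wc hμ hσ hw hσpos hwpos hwsum r hr C hrb hr'b α
end
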